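/- Let n₁, n₂ ≥ 1, l ∈ ℕ, 0 < q_i < p_i ≤ 1 and 0 ≤ α_i ≤ β_i for i = 1,2, and let f : [0,∞) × [0,∞) → ℝ be bounded and continuous. For (x₁,x₂) ∈ [0,1] × [0,1], set δ₁ = √(S((t₁ − x₁)²; x₁, x₂)) and δ₂ = √(S((t₂ − x₂)²; x₁, x₂)), where (t_i − x_i)² denotes the function of (t₁,t₂) equal to (t_i − x_i)². If δ₁ > 0 and δ₂ > 0, then |S(f; x₁, x₂) − f(x₁, x₂)| ≤ 4·ω_total(f; δ₁, δ₂). -/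

import Mathlib

open Finset

/-- The (p,q)-integer `[k]_{p,q} = (p^k - q^k)/(p - q)`. -/
noncomputable def pqInt (p q : ℝ) (k : ℕ) : ℝ := (p ^ k - q ^ k) / (p - q)

/-- The (p,q)-factorial `[n]_{p,q}! = ∏_{k=1}^n [k]_{p,q}`. -/
noncomputable def pqFact (p q : ℝ) (n : ℕ) : ℝ := ∏ k ∈ Finset.Icc 1 n, pqInt p q k

/-- The (p,q)-binomial coefficient `C(n,k)_{p,q}`. -/
noncomputable def pqBinom (p q : ℝ) (n k : ℕ) : ℝ :=
  pqFact p q n / (pqFact p q k * pqFact p q (n - k))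

/-- The (p,q)-Schurer basis function `s_{n,l,ν}^{p,q}(x)`. -/
noncomputable def schurerBasis (p q : ℝ) (n l ν : ℕ) (x : ℝ) : ℝ :=
  (1 / p ^ ((n + l) * (n + l - 1) / 2)) * pqBinom p q (n + l) ν *
    p ^ (ν * (ν - 1) / 2) * x ^ ν * ∏ j ∈ Finset.range (n + l - ν), (p ^ j - q ^ j * x)

/-- The Stancu node `T(ν) = (p^{n-ν}·[ν]_{p,q} + α)/([n]_{p,q} + β)`. -/
noncomputable def stancuNode (p q α β : ℝ) (n ν : ℕ) : ℝ :=
  (p ^ ((n : ℤ) - (ν : ℤ)) * pqInt p q ν + α) / (pqInt p q n + β)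

/-- The bivariate (p,q)-Schurer–Stancu operator. -/
noncomputable def schurerStancu (n₁ n₂ l : ℕ) (p₁ q₁ α₁ β₁ p₂ q₂ α₂ β₂ : ℝ)
    (f : ℝ → ℝ → ℝ) (x₁ x₂ : ℝ) : ℝ :=
  ∑ ν₁ ∈ Finset.range (n₁ + l + 1), ∑ ν₂ ∈ Finset.range (n₂ + l + 1),
    schurerBasis p₁ q₁ n₁ l ν₁ x₁ * schurerBasis p₂ q₂ n₂ l ν₂ x₂ *
      f (stancuNode p₁ q₁ α₁ β₁ n₁ ν₁) (stancuNode p₂ q₂ α₂ β₂ n₂ ν₂)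

/-- The total modulus of continuity on `[0,∞) × [0,∞)`:
`ω_total(f; δ₁, δ₂) = sup{ |f(x,y) − f(x′,y′)| : |x − x′| ≤ δ₁, |y − y′| ≤ δ₂ }`. -/
noncomputable def totalModulus (f : ℝ → ℝ → ℝ) (δ₁ δ₂ : ℝ) : ℝ :=
  sSup { r : ℝ | ∃ x y x' y', 0 ≤ x ∧ 0 ≤ y ∧ 0 ≤ x' ∧ 0 ≤ y' ∧
    |x - x'| ≤ δ₁ ∧ |y - y'| ≤ δ₂ ∧ r = |f x y - f x' y'| }

/-!
The weights `s_{n₁,l,ν₁}(x₁) s_{n₂,l,ν₂}(x₂)` are nonnegative on `[0,1]²` and, by the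
`(p,q)`-binomial theorem `∑ C(m,ν) p^{ν(ν-1)/2} x^ν ∏_{j<m-ν} (p^j - q^j x) = p^{m(m-1)/2}`,
sum to `1`, so `S` averages `f` over the nodes `(T₁ ν₁, T₂ ν₂) ∈ [0,∞)²`. Splitting a segment into
`⌈|t - x|/δ⌉` pieces of length at most `δ` gives
`|f(t,s) - f(x,y)| ≤ (2 + |t - x|/δ₁ + |s - y|/δ₂) ω`, and averaging this bound, with
`∑ w |T - x| ≤ √(∑ w (T - x)²) = δ` by Cauchy–Schwarz, yields `4ω`.
-/

lemma Finset.sum_range_add_two_eq_sum_add {M : Type*} [AddCommMonoid M] {g u v : ℕ → M}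
    (m : ℕ) (h₀ : g 0 = u 0) (h : ∀ k < m, g (k + 1) = u (k + 1) + v k)
    (hm : g (m + 1) = v m) :
    ∑ i ∈ range (m + 2), g i = ∑ i ∈ range (m + 1), (u i + v i) := by
  rw [sum_range_succ', sum_range_succ, sum_add_distrib, sum_range_succ' u, sum_range_succ v,
    sum_congr rfl fun k hk => h k (mem_range.1 hk), sum_add_distrib, h₀, hm]
  abel

section pq

variable {p q : ℝ}

lemma pqInt_pos (hq : 0 ≤ q) (hqp : q < p) {k : ℕ} (hk : k ≠ 0) : 0 < pqInt p q k :=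
  div_pos (sub_pos.2 (pow_lt_pow_left₀ hqp hq hk)) (sub_pos.2 hqp)

lemma pqInt_nonneg (hq : 0 ≤ q) (hqp : q < p) (k : ℕ) : 0 ≤ pqInt p q k := by
  rcases eq_or_ne k 0 with rfl | hk
  · simp [pqInt]
  · exact (pqInt_pos hq hqp hk).le

lemma pqInt_add (hpq : p ≠ q) (a b : ℕ) :
    pqInt p q (a + b) = p ^ a * pqInt p q b + q ^ b * pqInt p q a := by
  have : p - q ≠ 0 := sub_ne_zero.2 hpq
  simp only [pqInt]
  field_simp
  ring

lemma pqFact_zero : pqFact p q 0 = 1 := by simp [pqFact]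

lemma pqFact_succ (n : ℕ) : pqFact p q (n + 1) = pqFact p q n * pqInt p q (n + 1) :=
  prod_Icc_succ_top (by omega) _

lemma pqFact_pos (hq : 0 ≤ q) (hqp : q < p) (n : ℕ) : 0 < pqFact p q n :=
  prod_pos fun k hk => pqInt_pos hq hqp (by have := (mem_Icc.1 hk).1; omega)

lemma pqBinom_pos (hq : 0 ≤ q) (hqp : q < p) (n k : ℕ) : 0 < pqBinom p q n k :=
  div_pos (pqFact_pos hq hqp n) (mul_pos (pqFact_pos hq hqp k) (pqFact_pos hq hqp (n - k)))

lemma pqBinom_zero_right (hq : 0 ≤ q) (hqp : q < p) (n : ℕ) : pqBinom p q n 0 = 1 := by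
  rw [pqBinom, pqFact_zero, one_mul, Nat.sub_zero, div_self (pqFact_pos hq hqp n).ne']

lemma pqBinom_self (hq : 0 ≤ q) (hqp : q < p) (n : ℕ) : pqBinom p q n n = 1 := by
  rw [pqBinom, Nat.sub_self, pqFact_zero, mul_one, div_self (pqFact_pos hq hqp n).ne']

lemma pqBinom_succ_succ (hq : 0 ≤ q) (hqp : q < p) {m k : ℕ} (hk : k < m) :
    pqBinom p q (m + 1) (k + 1) =
      p ^ (k + 1) * pqBinom p q m (k + 1) + q ^ (m - k) * pqBinom p q m k := by
  obtain ⟨r, rfl⟩ : ∃ r, m = k + 1 + r := ⟨m - (k + 1), by omega⟩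
  have hsplit := pqInt_add (p := p) (q := q) hqp.ne' (k + 1) (r + 1)
  rw [show k + 1 + (r + 1) = k + 1 + r + 1 by ring] at hsplit
  simp only [pqBinom, show k + 1 + r + 1 - (k + 1) = r + 1 by omega,
    show k + 1 + r - (k + 1) = r by omega, show k + 1 + r - k = r + 1 by omega,
    pqFact_succ (k + 1 + r), pqFact_succ k, pqFact_succ r, hsplit]
  have := (pqFact_pos hq hqp k).ne'
  have := (pqFact_pos hq hqp r).ne'
  have := (pqInt_pos hq hqp k.succ_ne_zero).ne'
  have := (pqInt_pos hq hqp r.succ_ne_zero).ne'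
  field_simp

lemma pow_triangle_succ {M : Type*} [Monoid M] (p : M) (ν : ℕ) :
    p ^ ((ν + 1) * (ν + 1 - 1) / 2) = p ^ (ν * (ν - 1) / 2) * p ^ ν := by
  rw [Nat.triangle_succ, pow_add]

theorem sum_pqBinom_mul_prod_sub (hq : 0 ≤ q) (hqp : q < p) (x : ℝ) (m : ℕ) :
    ∑ ν ∈ range (m + 1), pqBinom p q m ν * p ^ (ν * (ν - 1) / 2) * x ^ ν *
      ∏ j ∈ range (m - ν), (p ^ j - q ^ j * x) = p ^ (m * (m - 1) / 2) := by
  induction m with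
  | zero => simp [pqBinom_zero_right hq hqp]
  | succ m ih =>
    set a : ℕ → ℝ := fun ν => p ^ (ν * (ν - 1) / 2) * x ^ ν
    set P : ℕ → ℝ := fun r => ∏ j ∈ range r, (p ^ j - q ^ j * x)
    have ha : ∀ ν, a (ν + 1) = p ^ ν * x * a ν := fun ν => by
      simp only [a, pow_triangle_succ, pow_succ]; ring
    have hP : ∀ ν ≤ m, P (m + 1 - ν) = P (m - ν) * (p ^ (m - ν) - q ^ (m - ν) * x) :=
      fun ν hν => by simp only [P, Nat.sub_add_comm hν, prod_range_succ]
    -- by the Pascal rule, term `ν` of the sum for `m + 1` is `u ν + v (ν - 1)`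
    set u : ℕ → ℝ := fun ν => p ^ ν * pqBinom p q m ν * a ν * P (m + 1 - ν)
    set v : ℕ → ℝ := fun ν => q ^ (m - ν) * pqBinom p q m ν * a (ν + 1) * P (m - ν)
    have huv : ∀ ν ≤ m, u ν + v ν = p ^ m * (pqBinom p q m ν * a ν * P (m - ν)) := by
      intro ν hν
      have hpow : p ^ ν * p ^ (m - ν) = p ^ m := by rw [← pow_add, Nat.add_sub_cancel' hν]
      simp only [u, v, hP ν hν, ha]
      linear_combination (pqBinom p q m ν * a ν * P (m - ν)) * hpow
    calc ∑ ν ∈ range (m + 1 + 1), pqBinom p q (m + 1) ν * p ^ (ν * (ν - 1) / 2) * x ^ ν *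
          ∏ j ∈ range (m + 1 - ν), (p ^ j - q ^ j * x)
        = ∑ ν ∈ range (m + 1), (u ν + v ν) := by
          refine sum_range_add_two_eq_sum_add m ?_ (fun k hk => ?_) ?_
          · simp [u, a, P, pqBinom_zero_right hq hqp]
          · simp only [u, v, a, P, pqBinom_succ_succ hq hqp hk, Nat.add_sub_add_right]
            ring
          · simp [v, a, P, pqBinom_self hq hqp]
      _ = p ^ m * ∑ ν ∈ range (m + 1), pqBinom p q m ν * a ν * P (m - ν) := by
          rw [mul_sum]
          exact sum_congr rfl fun ν hν => huv ν (Nat.lt_succ_iff.1 (mem_range.1 hν))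
      _ = p ^ ((m + 1) * (m + 1 - 1) / 2) := by
          simp only [a, P, ← mul_assoc] at ih ⊢
          rw [ih, pow_triangle_succ, mul_comm]

theorem sum_schurerBasis (hq : 0 ≤ q) (hqp : q < p) (n l : ℕ) (x : ℝ) :
    ∑ ν ∈ range (n + l + 1), schurerBasis p q n l ν x = 1 := by
  have hp : p ^ ((n + l) * (n + l - 1) / 2) ≠ 0 := pow_ne_zero _ (hq.trans_lt hqp).ne'
  calc ∑ ν ∈ range (n + l + 1), schurerBasis p q n l ν x
      = 1 / p ^ ((n + l) * (n + l - 1) / 2) * ∑ ν ∈ range (n + l + 1),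
          pqBinom p q (n + l) ν * p ^ (ν * (ν - 1) / 2) * x ^ ν *
            ∏ j ∈ range (n + l - ν), (p ^ j - q ^ j * x) := by
        rw [mul_sum]
        exact sum_congr rfl fun ν _ => by rw [schurerBasis]; ring
    _ = 1 := by rw [sum_pqBinom_mul_prod_sub hq hqp, one_div_mul_cancel hp]

lemma schurerBasis_nonneg (hq : 0 ≤ q) (hqp : q < p) (n l ν : ℕ) {x : ℝ} (hx : x ∈ Set.Icc 0 1) :
    0 ≤ schurerBasis p q n l ν x := by
  have hp : 0 < p := hq.trans_lt hqp
  have hprod : 0 ≤ ∏ j ∈ range (n + l - ν), (p ^ j - q ^ j * x) :=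
    prod_nonneg fun j _ => sub_nonneg.2 <|
      (mul_le_of_le_one_right (pow_nonneg hq j) hx.2).trans (pow_le_pow_left₀ hq hqp.le j)
  have := pqBinom_pos hq hqp (n + l) ν
  have := hx.1
  rw [schurerBasis]
  positivity

lemma stancuNode_nonneg (hq : 0 ≤ q) (hqp : q < p) {α β : ℝ} (hα : 0 ≤ α) (hβ : 0 ≤ β)
    (n ν : ℕ) : 0 ≤ stancuNode p q α β n ν :=
  div_nonneg
    (add_nonneg (mul_nonneg (zpow_pos (hq.trans_lt hqp) _).le (pqInt_nonneg hq hqp ν)) hα)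
    (add_nonneg (pqInt_nonneg hq hqp n) hβ)

end pq

lemma abs_sub_le_nat_mul_of_forall {s : Set ℝ} (hs : Convex ℝ s) {g : ℝ → ℝ} {δ ω : ℝ}
    (hg : ∀ a ∈ s, ∀ b ∈ s, |a - b| ≤ δ → |g a - g b| ≤ ω) (m : ℕ) :
    ∀ a ∈ s, ∀ b ∈ s, |a - b| ≤ m * δ → |g a - g b| ≤ m * ω := by
  induction m with
  | zero =>
    intro a _ b _ hab
    rw [Nat.cast_zero, zero_mul, abs_nonpos_iff, sub_eq_zero] at hab
    simp [hab]
  | succ m ih =>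
    intro a ha b hb hab
    have hm : (0 : ℝ) < m + 1 := by positivity
    set c := b + (m / (m + 1) : ℝ) • (a - b)
    have hc : c ∈ s := hs.add_smul_sub_mem hb ha
      ⟨by positivity, (div_le_one hm).2 (by linarith)⟩
    have hac : |a - c| = |a - b| / (m + 1) := by
      rw [show a - c = (a - b) / (m + 1) by simp only [c, smul_eq_mul]; field_simp; ring,
        abs_div, abs_of_pos hm]
    have hcb : |c - b| = m * (|a - b| / (m + 1)) := by
      rw [show c - b = m * ((a - b) / (m + 1)) by simp only [c, smul_eq_mul]; ring,
        abs_mul, abs_div, abs_of_pos hm, Nat.abs_cast]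
    have hstep : |a - b| / (m + 1) ≤ δ := by
      rw [div_le_iff₀ hm]; push_cast at hab; linarith
    calc |g a - g b| ≤ |g a - g c| + |g c - g b| := abs_sub_le _ _ _
      _ ≤ ω + m * ω := add_le_add (hg a ha c hc (hac ▸ hstep))
          (ih c hc b hb (hcb ▸ mul_le_mul_of_nonneg_left hstep m.cast_nonneg))
      _ = (m + 1 : ℕ) * ω := by push_cast; ring

lemma abs_sub_le_one_add_div_mul_of_forall {s : Set ℝ} (hs : Convex ℝ s) {g : ℝ → ℝ}
    {δ ω : ℝ} (hδ : 0 < δ) (hg : ∀ a ∈ s, ∀ b ∈ s, |a - b| ≤ δ → |g a - g b| ≤ ω)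
    {a b : ℝ} (ha : a ∈ s) (hb : b ∈ s) : |g a - g b| ≤ (1 + |a - b| / δ) * ω := by
  have hω : 0 ≤ ω := by simpa using hg a ha a ha (by simpa using hδ.le)
  set m := ⌈|a - b| / δ⌉₊
  have hm : |a - b| ≤ m * δ := (div_le_iff₀ hδ).1 (Nat.le_ceil _)
  have hm' : (m : ℝ) ≤ 1 + |a - b| / δ := by
    linarith [Nat.ceil_lt_add_one (div_nonneg (abs_nonneg (a - b)) hδ.le)]
  exact (abs_sub_le_nat_mul_of_forall hs hg m a ha b hb hm).trans
    (mul_le_mul_of_nonneg_right hm' hω)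

lemma abs_sub_le_two_add_div_mul_of_forall {s₁ s₂ : Set ℝ} (hs₁ : Convex ℝ s₁)
    (hs₂ : Convex ℝ s₂) {f : ℝ → ℝ → ℝ} {δ₁ δ₂ ω : ℝ} (hδ₁ : 0 < δ₁) (hδ₂ : 0 < δ₂)
    (hf : ∀ a ∈ s₁, ∀ a' ∈ s₁, ∀ b ∈ s₂, ∀ b' ∈ s₂, |a - a'| ≤ δ₁ → |b - b'| ≤ δ₂ →
      |f a b - f a' b'| ≤ ω)
    {a a' b b' : ℝ} (ha : a ∈ s₁) (ha' : a' ∈ s₁) (hb : b ∈ s₂) (hb' : b' ∈ s₂) :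
    |f a b - f a' b'| ≤ (2 + |a - a'| / δ₁ + |b - b'| / δ₂) * ω := by
  have h₂ := abs_sub_le_one_add_div_mul_of_forall hs₂ hδ₂
    (fun b hb b' hb' h => hf a ha a ha b hb b' hb' (by simpa using hδ₁.le) h) hb hb'
  have h₁ := abs_sub_le_one_add_div_mul_of_forall hs₁ hδ₁
    (fun a ha a' ha' h => hf a ha a' ha' b' hb' b' hb' h (by simpa using hδ₂.le)) ha ha'
  calc |f a b - f a' b'| ≤ |f a b - f a b'| + |f a b' - f a' b'| := abs_sub_le _ _ _
    _ ≤ _ := add_le_add h₂ h₁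
    _ = _ := by ring

lemma sum_mul_abs_le_sqrt_sum_mul_sq {ι : Type*} {R : Finset ι} {w a : ι → ℝ}
    (hw : ∀ i ∈ R, 0 ≤ w i) (hw₁ : ∑ i ∈ R, w i = 1) :
    ∑ i ∈ R, w i * |a i| ≤ √(∑ i ∈ R, w i * a i ^ 2) := by
  have h := sum_sq_le_sum_mul_sum_of_sq_le_mul R hw
    (fun i hi => mul_nonneg (hw i hi) (sq_nonneg (a i)))
    (r := fun i => w i * |a i|) (fun i _ => by rw [mul_pow, sq_abs, sq, mul_assoc])
  rw [hw₁, one_mul] at h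
  exact (le_abs_self _).trans (Real.abs_le_sqrt h)

lemma abs_sum_mul_sub_le_four_mul {ι : Type*} {R : Finset ι} {w u v : ι → ℝ}
    {s₁ s₂ : Set ℝ} (hs₁ : Convex ℝ s₁) (hs₂ : Convex ℝ s₂) {f : ℝ → ℝ → ℝ} {δ₁ δ₂ ω : ℝ}
    (hδ₁ : 0 < δ₁) (hδ₂ : 0 < δ₂)
    (hf : ∀ a ∈ s₁, ∀ a' ∈ s₁, ∀ b ∈ s₂, ∀ b' ∈ s₂, |a - a'| ≤ δ₁ → |b - b'| ≤ δ₂ →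
      |f a b - f a' b'| ≤ ω)
    (hw : ∀ i ∈ R, 0 ≤ w i) (hw₁ : ∑ i ∈ R, w i = 1)
    (hu : ∀ i ∈ R, u i ∈ s₁) (hv : ∀ i ∈ R, v i ∈ s₂) {x y : ℝ} (hx : x ∈ s₁) (hy : y ∈ s₂)
    (hux : √(∑ i ∈ R, w i * (u i - x) ^ 2) ≤ δ₁) (hvy : √(∑ i ∈ R, w i * (v i - y) ^ 2) ≤ δ₂) :
    |∑ i ∈ R, w i * f (u i) (v i) - f x y| ≤ 4 * ω := by
  have hω : 0 ≤ ω := by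
    simpa using hf x hx x hx y hy y hy (by simpa using hδ₁.le) (by simpa using hδ₂.le)
  have hU := (sum_mul_abs_le_sqrt_sum_mul_sq (a := fun i => u i - x) hw hw₁).trans hux
  have hV := (sum_mul_abs_le_sqrt_sum_mul_sq (a := fun i => v i - y) hw hw₁).trans hvy
  calc |∑ i ∈ R, w i * f (u i) (v i) - f x y|
      = |∑ i ∈ R, w i * (f (u i) (v i) - f x y)| := by
        simp only [mul_sub, sum_sub_distrib, ← sum_mul, hw₁, one_mul]
    _ ≤ ∑ i ∈ R, w i * |f (u i) (v i) - f x y| := by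
        refine (abs_sum_le_sum_abs _ _).trans (sum_le_sum fun i hi => ?_)
        rw [abs_mul, abs_of_nonneg (hw i hi)]
    _ ≤ ∑ i ∈ R, w i * ((2 + |u i - x| / δ₁ + |v i - y| / δ₂) * ω) :=
        sum_le_sum fun i hi => mul_le_mul_of_nonneg_left
          (abs_sub_le_two_add_div_mul_of_forall hs₁ hs₂ hδ₁ hδ₂ hf (hu i hi) hx (hv i hi) hy)
          (hw i hi)
    _ = (2 * ∑ i ∈ R, w i + (∑ i ∈ R, w i * |u i - x|) / δ₁
          + (∑ i ∈ R, w i * |v i - y|) / δ₂) * ω := by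
        simp only [mul_sum, sum_mul, sum_div, ← sum_add_distrib]
        exact sum_congr rfl fun i _ => by ring
    _ ≤ (2 * 1 + δ₁ / δ₁ + δ₂ / δ₂) * ω := by
        rw [hw₁]; gcongr
    _ = 4 * ω := by rw [div_self hδ₁.ne', div_self hδ₂.ne']; ring

lemma schurerStancu_eq_sum_product (n₁ n₂ l : ℕ) (p₁ q₁ α₁ β₁ p₂ q₂ α₂ β₂ : ℝ)
    (f : ℝ → ℝ → ℝ) (x₁ x₂ : ℝ) :
    schurerStancu n₁ n₂ l p₁ q₁ α₁ β₁ p₂ q₂ α₂ β₂ f x₁ x₂ =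
      ∑ ν ∈ range (n₁ + l + 1) ×ˢ range (n₂ + l + 1),
        schurerBasis p₁ q₁ n₁ l ν.1 x₁ * schurerBasis p₂ q₂ n₂ l ν.2 x₂ *
          f (stancuNode p₁ q₁ α₁ β₁ n₁ ν.1) (stancuNode p₂ q₂ α₂ β₂ n₂ ν.2) := by
  rw [schurerStancu, sum_product]

lemma abs_sub_le_totalModulus {f : ℝ → ℝ → ℝ} (hf : ∃ M, ∀ t s, 0 ≤ t → 0 ≤ s → |f t s| ≤ M)
    {δ₁ δ₂ x y x' y' : ℝ} (hx : 0 ≤ x) (hx' : 0 ≤ x') (hy : 0 ≤ y) (hy' : 0 ≤ y')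
    (h₁ : |x - x'| ≤ δ₁) (h₂ : |y - y'| ≤ δ₂) :
    |f x y - f x' y'| ≤ totalModulus f δ₁ δ₂ := by
  obtain ⟨M, hM⟩ := hf
  refine le_csSup ⟨M + M, ?_⟩ ⟨x, y, x', y', hx, hy, hx', hy', h₁, h₂, rfl⟩
  rintro r ⟨a, b, a', b', ha, hb, ha', hb', -, -, rfl⟩
  exact (abs_sub _ _).trans (add_le_add (hM a b ha hb) (hM a' b' ha' hb'))

theorem schurerStancu_rate_of_convergence_general (n₁ n₂ l : ℕ)
    (p₁ q₁ α₁ β₁ p₂ q₂ α₂ β₂ : ℝ)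
    (hq₁ : 0 < q₁) (hq₁p : q₁ < p₁) (hα₁ : 0 ≤ α₁) (hαβ₁ : α₁ ≤ β₁)
    (hq₂ : 0 < q₂) (hq₂p : q₂ < p₂) (hα₂ : 0 ≤ α₂) (hαβ₂ : α₂ ≤ β₂)
    (f : ℝ → ℝ → ℝ)
    (hfb : ∃ M, ∀ t s, 0 ≤ t → 0 ≤ s → |f t s| ≤ M)
    (x₁ x₂ : ℝ) (hx₁ : x₁ ∈ Set.Icc (0 : ℝ) 1) (hx₂ : x₂ ∈ Set.Icc (0 : ℝ) 1)
    (δ₁ δ₂ : ℝ)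
    (hδ₁ : δ₁ = Real.sqrt (schurerStancu n₁ n₂ l p₁ q₁ α₁ β₁ p₂ q₂ α₂ β₂
      (fun t₁ _ => (t₁ - x₁) ^ 2) x₁ x₂))
    (hδ₂ : δ₂ = Real.sqrt (schurerStancu n₁ n₂ l p₁ q₁ α₁ β₁ p₂ q₂ α₂ β₂
      (fun _ t₂ => (t₂ - x₂) ^ 2) x₁ x₂))
    (hδ₁pos : 0 < δ₁) (hδ₂pos : 0 < δ₂) :
    |schurerStancu n₁ n₂ l p₁ q₁ α₁ β₁ p₂ q₂ α₂ β₂ f x₁ x₂ - f x₁ x₂| ≤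
      4 * totalModulus f δ₁ δ₂ := by
  have hw : ∀ ν ∈ range (n₁ + l + 1) ×ˢ range (n₂ + l + 1),
      0 ≤ schurerBasis p₁ q₁ n₁ l ν.1 x₁ * schurerBasis p₂ q₂ n₂ l ν.2 x₂ := fun ν _ =>
    mul_nonneg (schurerBasis_nonneg hq₁.le hq₁p _ _ _ hx₁)
      (schurerBasis_nonneg hq₂.le hq₂p _ _ _ hx₂)
  have hw₁ : ∑ ν ∈ range (n₁ + l + 1) ×ˢ range (n₂ + l + 1),
      schurerBasis p₁ q₁ n₁ l ν.1 x₁ * schurerBasis p₂ q₂ n₂ l ν.2 x₂ = 1 := by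
    simp only [sum_product, ← sum_mul_sum, sum_schurerBasis hq₁.le hq₁p,
      sum_schurerBasis hq₂.le hq₂p, one_mul]
  rw [schurerStancu_eq_sum_product] at hδ₁ hδ₂ ⊢
  exact abs_sum_mul_sub_le_four_mul (convex_Ici 0) (convex_Ici 0) hδ₁pos hδ₂pos
    (fun a ha a' ha' b hb b' hb' => abs_sub_le_totalModulus hfb ha ha' hb hb') hw hw₁
    (fun ν _ => stancuNode_nonneg hq₁.le hq₁p hα₁ (hα₁.trans hαβ₁) n₁ ν.1)
    (fun ν _ => stancuNode_nonneg hq₂.le hq₂p hα₂ (hα₂.trans hαβ₂) n₂ ν.2)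
    hx₁.1 hx₂.1 hδ₁.ge hδ₂.ge

/-- **Rate of convergence for bivariate (p,q)-Schurer–Stancu operators.** With
`δᵢ = √(S((tᵢ − xᵢ)²; x₁, x₂))`, for any bounded continuous `f : [0,∞)² → ℝ` and
`(x₁, x₂) ∈ [0,1]²` one has `|S(f; x₁, x₂) − f(x₁, x₂)| ≤ 4·ω_total(f; δ₁, δ₂)`. -/
theorem schurerStancu_rate_of_convergence (n₁ n₂ l : ℕ) (hn₁ : 1 ≤ n₁) (hn₂ : 1 ≤ n₂)
    (p₁ q₁ α₁ β₁ p₂ q₂ α₂ β₂ : ℝ)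
    (hq₁ : 0 < q₁) (hq₁p : q₁ < p₁) (hp₁ : p₁ ≤ 1) (hα₁ : 0 ≤ α₁) (hαβ₁ : α₁ ≤ β₁)
    (hq₂ : 0 < q₂) (hq₂p : q₂ < p₂) (hp₂ : p₂ ≤ 1) (hα₂ : 0 ≤ α₂) (hαβ₂ : α₂ ≤ β₂)
    (f : ℝ → ℝ → ℝ)
    (hfb : ∃ M, ∀ t s, 0 ≤ t → 0 ≤ s → |f t s| ≤ M)
    (hfc : ContinuousOn (fun z : ℝ × ℝ => f z.1 z.2) (Set.Ici 0 ×ˢ Set.Ici 0))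
    (x₁ x₂ : ℝ) (hx₁ : x₁ ∈ Set.Icc (0 : ℝ) 1) (hx₂ : x₂ ∈ Set.Icc (0 : ℝ) 1)
    (δ₁ δ₂ : ℝ)
    (hδ₁ : δ₁ = Real.sqrt (schurerStancu n₁ n₂ l p₁ q₁ α₁ β₁ p₂ q₂ α₂ β₂
      (fun t₁ _ => (t₁ - x₁) ^ 2) x₁ x₂))
    (hδ₂ : δ₂ = Real.sqrt (schurerStancu n₁ n₂ l p₁ q₁ α₁ β₁ p₂ q₂ α₂ β₂
      (fun _ t₂ => (t₂ - x₂) ^ 2) x₁ x₂))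
    (hδ₁pos : 0 < δ₁) (hδ₂pos : 0 < δ₂) :
    |schurerStancu n₁ n₂ l p₁ q₁ α₁ β₁ p₂ q₂ α₂ β₂ f x₁ x₂ - f x₁ x₂| ≤
      4 * totalModulus f δ₁ δ₂ :=
  schurerStancu_rate_of_convergence_general n₁ n₂ l p₁ q₁ α₁ β₁ p₂ q₂ α₂ β₂ hq₁ hq₁p hα₁ hαβ₁ hq₂
    hq₂p hα₂ hαβ₂ f hfb x₁ x₂ hx₁ hx₂ δ₁ δ₂ hδ₁ hδ₂ hδ₁pos hδ₂pos
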